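/- In the Bullshark commit rule, if an anchor vertex at round 2k is committed by some honest member (gathered f+1 votes in round 2k+1), then every honest member that later commits an anchor at a higher round will have that earlier anchor in the causal history of its committed anchor; consequently all honest members commit anchors in the same order. (Abstract version: if every quorum of 2f+1 round-(2k+1) vertices intersects the f+1 voters of a committed anchor, then any anchor committed at round 2k+2 or later causally references the round-2k committed anchor.) -/

import Mathlib

open Finset

theorem exists_mem_voters_mem_ref_of_card_round_lt
    {V : Type*} [Fintype V] [DecidableEq V] (round : V → ℕ) (ref : V → Finset V) (r q : ℕ)
    (hround_card : #{u | round u = r} ≤ q) (voters : Finset V)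
    (hvoters_round : ∀ u ∈ voters, round u = r) (v : V)
    (hquorum : q < #voters + #{u ∈ ref v | round u = r}) :
    ∃ u ∈ voters, u ∈ ref v := by
  have hvoters_sub : voters ⊆ ({u | round u = r} : Finset V) := fun u hu => by
    simpa using hvoters_round u hu
  have hrefs_sub : {u ∈ ref v | round u = r} ⊆ ({u | round u = r} : Finset V) :=
    fun u hu => by simpa using (mem_filter.mp hu).2
  obtain ⟨u, hu⟩ := inter_nonempty_of_card_lt_card_add_card hvoters_sub hrefs_sub
    (hround_card.trans_lt hquorum)
  rw [mem_inter, mem_filter] at hu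
  exact ⟨u, hu.1, hu.2.1⟩

/-- Bullshark commit rule (abstract): in a DAG whose round `2k+1` has at most
`3f+1` vertices, if an anchor gathered at least `f+1` round-`(2k+1)` voters and a
vertex `v` references at least `2f+1` round-`(2k+1)` vertices, then since
`(f+1) + (2f+1) > 3f+1`, the anchor lies in the causal history of `v`. -/
theorem committed_anchor_in_causal_history
    {V : Type*} [Fintype V] [DecidableEq V]
    (f k : ℕ) (round : V → ℕ) (ref : V → Finset V)
    (hround_card : (Finset.univ.filter (fun u : V => round u = 2 * k + 1)).card ≤ 3 * f + 1)
    (anchor : V) (voters : Finset V)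
    (hvoters_round : ∀ u ∈ voters, round u = 2 * k + 1)
    (hvoters_card : f + 1 ≤ voters.card)
    (hvote : ∀ u ∈ voters, anchor ∈ ref u)
    (v : V)
    (hv_refs : 2 * f + 1 ≤ ((ref v).filter (fun u => round u = 2 * k + 1)).card) :
    Relation.ReflTransGen (fun a b => a ∈ ref b) anchor v := by
  obtain ⟨u, hu_voter, hu_ref⟩ :=
    exists_mem_voters_mem_ref_of_card_round_lt round ref (2 * k + 1) (3 * f + 1) hround_card
      voters hvoters_round v (by omega)
  exact .head (hvote u hu_voter) (.single hu_ref)
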